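/- The distributional topological complexity is a homotopy invariant: if f : X → Y and g : Y → X are continuous maps with f ∘ g homotopic to the identity of Y, then dTC(Y) ≤ dTC(X). In particular, homotopy equivalent spaces have equal dTC. -/

import Mathlib

open MeasureTheory unitInterval

noncomputable section

/-- The path space `P(X)`: all continuous maps `[0,1] → X`, with the compact-open topology. -/
abbrev PathSp (X : Type*) [TopologicalSpace X] := C(unitInterval, X)

noncomputable instance (X : Type*) [TopologicalSpace X] : MeasurableSpace (PathSp X) := borel _
instance (X : Type*) [TopologicalSpace X] : BorelSpace (PathSp X) := ⟨rfl⟩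

/-- `μ` is a probability measure supported on at most `k` paths from `x` to `y`. -/
def DistPaths {X : Type*} [TopologicalSpace X] (k : ℕ) (x y : X)
    (μ : ProbabilityMeasure (PathSp X)) : Prop :=
  ∃ S : Finset (PathSp X), S.card ≤ k ∧ (∀ φ ∈ S, φ 0 = x ∧ φ 1 = y) ∧
    (μ : Measure (PathSp X)) ((↑S : Set (PathSp X))ᶜ) = 0

/-- The distributional LS-category: the minimal `k` such that `X` admits a
`(k+1)`-distributed contraction to a point. -/
def dcat (X : Type*) [TopologicalSpace X] : ℕ∞ :=
  sInf {c : ℕ∞ | ∃ k : ℕ, c = k ∧ ∃ (x0 : X) (H : C(X, ProbabilityMeasure (PathSp X))),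
    ∀ x, DistPaths (k + 1) x x0 (H x)}

/-- The distributional topological complexity: the minimal `n` such that `X` admits an
`(n+1)`-distributed navigation algorithm. -/
def dTC (X : Type*) [TopologicalSpace X] : ℕ∞ :=
  sInf {c : ℕ∞ | ∃ n : ℕ, c = n ∧ ∃ s : C(X × X, ProbabilityMeasure (PathSp X)),
    ∀ x y, DistPaths (n + 1) x y (s (x, y))}

end

/-!
If `H : f ∘ g ≃ id_Y`, a navigation algorithm `s` on `X` transfers to `Y`: at `(y₁, y₂)` push the
measure `s (g y₁, g y₂)` forward along the map sending a path `γ` from `g y₁` to `g y₂` to the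
concatenation of `H` at `y₁` run backwards, `f ∘ γ`, and `H` at `y₂`; the support does not grow.
That path map is only defined on the closed set of compatible pairs `((y₁, y₂), γ)`, so weak
continuity is tested on a bounded continuous `F`: by Tietze, `F ∘ transfer` extends to a bounded
continuous `G` on all pairs, and `q ↦ ∫ G (q, ·) d(s (g q₁, g q₂))` is continuous at `q₀` since
the limit measure lives on a finite (compact) set: near that set `G (q, ·)` is uniformly close to
`G (q₀, ·)` for `q` near `q₀` by the tube lemma, and a Urysohn cutoff shows that the measures put
little mass away from it.
-/

open Filter Topology BoundedContinuousFunction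

theorem exists_isOpen_superset_eventually_dist_lt {T Z E : Type*} [TopologicalSpace T]
    [TopologicalSpace Z] [PseudoMetricSpace E] {G : T × Z → E} (hG : Continuous G)
    {K : Set Z} (hK : IsCompact K) (y : T) {δ : ℝ} (hδ : 0 < δ) :
    ∃ V : Set Z, IsOpen V ∧ K ⊆ V ∧ ∀ᶠ q in 𝓝 y, ∀ z ∈ V, dist (G (q, z)) (G (y, z)) < δ := by
  have hopen : IsOpen {p : T × Z | dist (G p) (G (y, p.2)) < δ} :=
    isOpen_lt (hG.dist (hG.comp (continuous_const.prodMk continuous_snd))) continuous_const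
  obtain ⟨U, V, hU, hV, hyU, hKV, hUV⟩ :=
    generalized_tube_lemma (isCompact_singleton (x := y)) hK hopen
      (by rintro ⟨q, z⟩ ⟨rfl, -⟩; simpa using hδ)
  exact ⟨V, hV, hKV, eventually_of_mem (hU.mem_nhds (hyU rfl)) fun q hq z hz => hUV ⟨hq, hz⟩⟩

theorem dist_integral_le_of_dist_le_on {Z : Type*} [TopologicalSpace Z] [MeasurableSpace Z]
    [OpensMeasurableSpace Z] {μ : Measure Z} [IsProbabilityMeasure μ] {u v : Z → ℝ}
    (hu : Integrable u μ) (hv : Integrable v μ) {C δ : ℝ} (hCu : ∀ z, ‖u z‖ ≤ C)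
    (hCv : ∀ z, ‖v z‖ ≤ C) (hδ : 0 ≤ δ) {V : Set Z} (huv : ∀ z ∈ V, dist (u z) (v z) ≤ δ)
    {χ : Z →ᵇ ℝ} (hχ0 : Set.EqOn χ 0 Vᶜ) (hχ01 : ∀ z, χ z ∈ Set.Icc (0 : ℝ) 1) :
    dist (∫ z, u z ∂μ) (∫ z, v z ∂μ) ≤ δ + 2 * C * (1 - ∫ z, χ z ∂μ) := by
  have hpoint : ∀ z, ‖u z - v z‖ ≤ δ + 2 * C * (1 - χ z) := by
    intro z
    have hC : 0 ≤ C := (norm_nonneg _).trans (hCu z)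
    by_cases hz : z ∈ V
    · rw [← dist_eq_norm]
      nlinarith [huv z hz, (hχ01 z).2]
    · rw [hχ0 hz, Pi.zero_apply]
      linarith [norm_sub_le (u z) (v z), hCu z, hCv z]
  have hslack : Integrable (fun z => 2 * C * (1 - χ z)) μ :=
    ((integrable_const _).sub (χ.integrable _)).const_mul _
  have hbound : Integrable (fun z => δ + 2 * C * (1 - χ z)) μ := (integrable_const _).add hslack
  rw [dist_eq_norm, ← integral_sub hu hv]
  refine (norm_integral_le_of_norm_le hbound (ae_of_all _ hpoint)).trans_eq ?_
  rw [integral_add (integrable_const _) hslack, integral_const_mul,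
    integral_sub (integrable_const _) (χ.integrable _)]
  simp

theorem tendsto_integral_of_tendsto_of_ae_mem_isCompact {T Z : Type*} [TopologicalSpace T]
    [TopologicalSpace Z] [NormalSpace Z] [T2Space Z] [MeasurableSpace Z] [OpensMeasurableSpace Z]
    {m : T → ProbabilityMeasure Z} {y : T} (hm : Tendsto m (𝓝 y) (𝓝 (m y)))
    {K : Set Z} (hK : IsCompact K) (hmK : ∀ᵐ z ∂(m y : Measure Z), z ∈ K) (G : T × Z →ᵇ ℝ) :
    Tendsto (fun q => ∫ z, G (q, z) ∂(m q : Measure Z)) (𝓝 y)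
      (𝓝 (∫ z, G (y, z) ∂(m y : Measure Z))) := by
  let Gsec : T → Z →ᵇ ℝ := fun q => G.compContinuous ⟨fun z => (q, z), by fun_prop⟩
  have hweak := ProbabilityMeasure.tendsto_iff_forall_integral_tendsto.mp hm
  rw [Metric.tendsto_nhds]
  intro ε hε
  obtain ⟨V, hVo, hKV, hV⟩ :=
    exists_isOpen_superset_eventually_dist_lt G.continuous hK y (by positivity : 0 < ε / 3)
  obtain ⟨χ, hχ0, hχ1, hχ01⟩ := exists_bounded_zero_one_of_closed hVo.isClosed_compl
    hK.isClosed (Set.disjoint_compl_left_iff_subset.mpr hKV)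
  have hχy : ∫ z, χ z ∂(m y : Measure Z) = 1 := by
    rw [integral_congr_ae (hmK.mono fun z hz => hχ1 hz)]
    simp
  have hmass : ∀ᶠ q in 𝓝 y, 2 * ‖G‖ * (1 - ∫ z, χ z ∂(m q : Measure Z)) < ε / 3 := by
    have h := ((hweak χ).const_sub 1).const_mul (2 * ‖G‖)
    rw [hχy, sub_self, mul_zero] at h
    exact h.eventually (eventually_lt_nhds (by positivity))
  have hint : ∀ q q', Integrable (fun z => G (q, z)) (m q' : Measure Z) :=
    fun q _ => (Gsec q).integrable _
  have hfixed : ∀ᶠ q in 𝓝 y, dist (∫ z, G (y, z) ∂(m q : Measure Z))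
      (∫ z, G (y, z) ∂(m y : Measure Z)) < ε / 3 :=
    Metric.tendsto_nhds.mp (hweak (Gsec y)) (ε / 3) (by positivity)
  filter_upwards [hV, hmass, hfixed] with q hqV hqmass hqfixed
  have hnear := dist_integral_le_of_dist_le_on (hint q q) (hint y q)
    (fun z => G.norm_coe_le_norm _) (fun z => G.norm_coe_le_norm _) (by positivity)
    (fun z hz => (hqV z hz).le) hχ0 hχ01
  calc _ ≤ _ := dist_triangle _ (∫ z, G (y, z) ∂(m q : Measure Z)) _
    _ < ε := by linarith

theorem Set.Countable.aemeasurable_of_ae_mem {α β : Type*} [MeasurableSpace α]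
    [MeasurableSingletonClass α] [MeasurableSpace β] {μ : Measure α} {s : Set α}
    (hs : s.Countable) (hμ : ∀ᵐ x ∂μ, x ∈ s) (f : α → β) : AEMeasurable f μ := by
  rw [← Measure.restrict_eq_self_of_ae_mem hμ]
  have := hs.to_subtype
  exact aemeasurable_restrict_of_measurable_subtype hs.measurableSet
    (measurable_of_countable _)

namespace DistPaths

variable {X Y : Type*} [TopologicalSpace X] [TopologicalSpace Y] {k : ℕ} {x y : X}
  {μ : ProbabilityMeasure (PathSp X)}

theorem ae_endpoints (h : DistPaths k x y μ) :
    ∀ᵐ γ ∂(μ : Measure (PathSp X)), γ 0 = x ∧ γ 1 = y := by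
  obtain ⟨S, -, hS, hμS⟩ := h
  exact (measure_eq_zero_iff_ae_notMem.mp hμS).mono fun γ hγ => hS γ (by simpa using hγ)

theorem aemeasurable [T2Space X] (h : DistPaths k x y μ) {β : Type*} [MeasurableSpace β]
    (F : PathSp X → β) : AEMeasurable F (μ : Measure (PathSp X)) := by
  obtain ⟨S, -, -, hμS⟩ := h
  exact S.countable_toSet.aemeasurable_of_ae_mem (mem_ae_iff.mpr hμS) F

theorem map [T2Space X] [T2Space Y] (h : DistPaths k x y μ) {x' y' : Y}
    (F : PathSp X → PathSp Y) (hF : ∀ γ : PathSp X, γ 0 = x → γ 1 = y → F γ 0 = x' ∧ F γ 1 = y') :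
    DistPaths k x' y' (μ.map (h.aemeasurable F)) := by
  classical
  have hFm := h.aemeasurable F
  obtain ⟨S, hcard, hS, hμS⟩ := h
  refine ⟨S.image F, Finset.card_image_le.trans hcard, ?_, ?_⟩
  · simp only [Finset.forall_mem_image]
    exact fun γ hγ => hF γ (hS γ hγ).1 (hS γ hγ).2
  · rw [ProbabilityMeasure.toMeasure_map,
      Measure.map_apply_of_aemeasurable hFm (Finset.measurableSet _).compl]
    exact measure_mono_null (fun γ hγ hmem => hγ (Finset.mem_image_of_mem F hmem)) hμS

end DistPaths

noncomputable section Transfer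

variable {X Y : Type*} [TopologicalSpace X] [TopologicalSpace Y] {f : C(X, Y)} {g : C(Y, X)}

def compatiblePaths (g : C(Y, X)) : Set ((Y × Y) × PathSp X) :=
  {p | p.2 0 = g p.1.1 ∧ p.2 1 = g p.1.2}

theorem isClosed_compatiblePaths [T2Space X] : IsClosed (compatiblePaths g) :=
  (isClosed_eq (by fun_prop) (by fun_prop)).inter (isClosed_eq (by fun_prop) (by fun_prop))

variable (H : (f.comp g).Homotopy (ContinuousMap.id Y))

def transferPath (p : compatiblePaths g) : Path p.1.1.1 p.1.1.2 :=
  (H.evalAt p.1.1.1).symm.trans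
    (((⟨p.1.2, p.2.1, p.2.2⟩ : Path (g p.1.1.1) (g p.1.1.2)).map f.continuous).trans
      (H.evalAt p.1.1.2))

theorem continuous_transferPath : Continuous fun p => (transferPath H p : PathSp Y) := by
  have hH : Continuous ↿fun p : compatiblePaths g => (H.evalAt p.1.1.1).symm :=
    Path.symm_continuous_family _ (H.continuous.comp (by fun_prop))
  have hγ : Continuous ↿fun p : compatiblePaths g =>
      (⟨p.1.2, p.2.1, p.2.2⟩ : Path (g p.1.1.1) (g p.1.1.2)).map f.continuous :=
    show Continuous fun q : compatiblePaths g × I => f (q.1.1.2 q.2) by fun_prop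
  have hH' : Continuous ↿fun p : compatiblePaths g => H.evalAt p.1.1.2 :=
    H.continuous.comp (by fun_prop)
  exact ContinuousMap.continuous_of_continuous_uncurry _
    (Path.trans_continuous_family _ hH _ (Path.trans_continuous_family _ hγ _ hH'))

-- The value off compatible pairs is a junk value, never seen by the measures pushed forward.
open Classical in
def transfer (q : Y × Y) (γ : PathSp X) : PathSp Y :=
  if h : (q, γ) ∈ compatiblePaths g then transferPath H ⟨(q, γ), h⟩ else ContinuousMap.const I q.1

theorem transfer_of_mem {q : Y × Y} {γ : PathSp X} (h : (q, γ) ∈ compatiblePaths g) :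
    transfer H q γ = transferPath H ⟨(q, γ), h⟩ :=
  dif_pos h

end Transfer

theorem exists_distPaths_of_homotopy_comp_id {X Y : Type*} [MetricSpace X] [MetricSpace Y]
    {f : C(X, Y)} {g : C(Y, X)} (H : (f.comp g).Homotopy (ContinuousMap.id Y)) {k : ℕ}
    (s : C(X × X, ProbabilityMeasure (PathSp X))) (hs : ∀ x y, DistPaths k x y (s (x, y))) :
    ∃ s' : C(Y × Y, ProbabilityMeasure (PathSp Y)), ∀ x y, DistPaths k x y (s' (x, y)) := by
  set m : Y × Y → ProbabilityMeasure (PathSp X) := fun q => s (g q.1, g q.2)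
  have hm : Continuous m := by fun_prop
  have hmq : ∀ q, DistPaths k (g q.1) (g q.2) (m q) := fun q => hs _ _
  let s' q := (m q).map ((hmq q).aemeasurable (transfer H q))
  refine ⟨⟨s', continuous_iff_continuousAt.mpr fun y => ?_⟩,
    fun y₁ y₂ => (hmq (y₁, y₂)).map _ fun γ h₀ h₁ => ?_⟩
  · rw [ContinuousAt, ProbabilityMeasure.tendsto_iff_forall_integral_tendsto]
    intro F
    obtain ⟨G, -, hG⟩ := exists_extension_norm_eq_of_isClosedEmbedding
      (F.compContinuous ⟨_, continuous_transferPath H⟩)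
      isClosed_compatiblePaths.isClosedEmbedding_subtypeVal
    have hFG : ∀ q, ∫ φ, F φ ∂(s' q : Measure (PathSp Y)) = ∫ γ, G (q, γ) ∂(m q : Measure _) := by
      intro q
      rw [ProbabilityMeasure.toMeasure_map,
        integral_map ((hmq q).aemeasurable _) F.continuous.aestronglyMeasurable]
      refine integral_congr_ae ((hmq q).ae_endpoints.mono fun γ hγ => ?_)
      simp only [transfer_of_mem H hγ]
      exact (congrFun hG ⟨_, hγ⟩).symm
    simp only [hFG]
    obtain ⟨S, -, -, hS⟩ := hmq y
    exact tendsto_integral_of_tendsto_of_ae_mem_isCompact (hm.tendsto y) S.finite_toSet.isCompact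
      (mem_ae_iff.mpr hS) G
  · rw [transfer_of_mem H ⟨h₀, h₁⟩]
    exact ⟨Path.source _, Path.target _⟩

theorem dTC_le_of_homotopic_comp_id {X Y : Type*} [MetricSpace X] [MetricSpace Y]
    {f : C(X, Y)} {g : C(Y, X)} (hfg : (f.comp g).Homotopic (ContinuousMap.id Y)) :
    dTC Y ≤ dTC X := by
  obtain ⟨H⟩ := hfg
  refine le_sInf ?_
  rintro _ ⟨n, rfl, s, hs⟩
  obtain ⟨s', hs'⟩ := exists_distPaths_of_homotopy_comp_id H s hs
  exact sInf_le ⟨n, rfl, s', hs'⟩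

/-- Homotopy invariance of the distributional topological complexity: if `X` homotopy
dominates `Y` (via `f : X → Y`, `g : Y → X` with `f ∘ g ≃ id`), then `dTC Y ≤ dTC X`;
in particular, homotopy equivalent spaces have the same `dTC`. -/
theorem dTC_homotopy_invariant :
    (∀ (X Y : Type) [MetricSpace X] [MetricSpace Y]
        [PathConnectedSpace X] [PathConnectedSpace Y]
        (f : C(X, Y)) (g : C(Y, X)),
        (f.comp g).Homotopic (ContinuousMap.id Y) → dTC Y ≤ dTC X) ∧
    (∀ (X Y : Type) [MetricSpace X] [MetricSpace Y]
        [PathConnectedSpace X] [PathConnectedSpace Y],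
        Nonempty (ContinuousMap.HomotopyEquiv X Y) → dTC X = dTC Y) := by
  refine ⟨fun X Y _ _ _ _ _ _ => dTC_le_of_homotopic_comp_id, ?_⟩
  rintro X Y _ _ _ _ ⟨e⟩
  exact le_antisymm (dTC_le_of_homotopic_comp_id e.left_inv)
    (dTC_le_of_homotopic_comp_id e.right_inv)
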